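/- There exists an IL_set-frame that is both an IL_set(P0)-frame and an IL_set(M0)-frame but not an IL_set(R)-frame; consequently ILP0M0 does not derive the principle R. -/

import Mathlib

/-- Modal formulas of interpretability logic: atoms, ⊥, →, □, ▷. -/
inductive Fm : Type
  | atom : ℕ → Fm
  | bot : Fm
  | imp : Fm → Fm → Fm
  | box : Fm → Fm
  | rhd : Fm → Fm → Fm
deriving DecidableEq

namespace Fm
def neg (A : Fm) : Fm := .imp A .bot
def conj (A B : Fm) : Fm := neg (.imp A (neg B))
def disj (A B : Fm) : Fm := .imp (neg A) B
def dia (A : Fm) : Fm := neg (.box (neg A))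
end Fm

/-- `f` is a boolean propositional evaluation (treats □ and ▷ formulas as atoms). -/
def PropEval (f : Fm → Bool) : Prop :=
  f Fm.bot = false ∧ ∀ A B, f (Fm.imp A B) = (!(f A) || f B)

/-- Propositional tautology. -/
def Taut (A : Fm) : Prop := ∀ f, PropEval f → f A = true

/-- Derivability in the interpretability logic IL extended with extra axioms `X`. -/
inductive Prov (X : Fm → Prop) : Fm → Prop
  | taut {A} : Taut A → Prov X A
  | extra {A} : X A → Prov X A
  | l1 (A B) : Prov X (.imp (.box (.imp A B)) (.imp (.box A) (.box B)))
  | l2 (A) : Prov X (.imp (.box A) (.box (.box A)))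
  | l3 (A) : Prov X (.imp (.box (.imp (.box A) A)) (.box A))
  | j1 (A B) : Prov X (.imp (.box (.imp A B)) (.rhd A B))
  | j2 (A B C) : Prov X (.imp (Fm.conj (.rhd A B) (.rhd B C)) (.rhd A C))
  | j3 (A B C) : Prov X (.imp (Fm.conj (.rhd A C) (.rhd B C)) (.rhd (Fm.disj A B) C))
  | j4 (A B) : Prov X (.imp (.rhd A B) (.imp (Fm.dia A) (Fm.dia B)))
  | j5 (A) : Prov X (.rhd (Fm.dia A) A)
  | mp {A B} : Prov X (.imp A B) → Prov X A → Prov X B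
  | nec {A} : Prov X A → Prov X (.box A)

/-- Derivability in plain IL. -/
def ILProv : Fm → Prop := Prov (fun _ => False)

/-- A Veltman frame (IL-frame). -/
structure VFrame where
  W : Type
  ne : Nonempty W
  R : W → W → Prop
  /-- `S x y z` means `y S_x z`. -/
  S : W → W → W → Prop
  R_trans : ∀ {x y z}, R x y → R y z → R x z
  R_cwf : WellFounded (fun x y => R y x)
  S_R : ∀ {x y z}, S x y z → R x y ∧ R x z
  S_refl : ∀ {x y}, R x y → S x y y
  R_S : ∀ {x y z}, R x y → R y z → S x y z
  S_trans : ∀ {x u v w}, S x u v → S x v w → S x u w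

structure VModel extends VFrame where
  val : W → ℕ → Prop

/-- Satisfaction on Veltman models. -/
def VSat (M : VModel) : M.W → Fm → Prop
  | w, .atom n => M.val w n
  | _, .bot => False
  | w, .imp A B => VSat M w A → VSat M w B
  | w, .box A => ∀ v, M.R w v → VSat M v A
  | w, .rhd A B => ∀ u, M.R w u → VSat M u A → ∃ v, M.S w u v ∧ VSat M v B

/-- Validity on a Veltman frame. -/
def VFrame.Valid (F : VFrame) (A : Fm) : Prop :=
  ∀ val : F.W → ℕ → Prop, ∀ w : F.W, VSat { toVFrame := F, val := val } w A

/-- A generalized Veltman frame (ILset-frame). -/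
structure GFrame where
  W : Type
  ne : Nonempty W
  R : W → W → Prop
  /-- `S w x Y` means `x S_w Y`. -/
  S : W → W → Set W → Prop
  R_trans : ∀ {x y z}, R x y → R y z → R x z
  R_cwf : WellFounded (fun x y => R y x)
  S_ne : ∀ {w x Y}, S w x Y → Y.Nonempty
  S_R : ∀ {w x Y}, S w x Y → R w x ∧ ∀ y ∈ Y, R w y
  S_refl : ∀ {w x}, R w x → S w x {x}
  S_qtrans : ∀ {w x Y}, S w x Y → ∀ y ∈ Y, ∀ Z, y ∉ Z → S w y Z → S w x Z
  R_S : ∀ {w x y}, R w x → R x y → S w x {y}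

structure GModel extends GFrame where
  val : W → ℕ → Prop

/-- Satisfaction on generalized Veltman models. -/
def GSat (M : GModel) : M.W → Fm → Prop
  | w, .atom n => M.val w n
  | _, .bot => False
  | w, .imp A B => GSat M w A → GSat M w B
  | w, .box A => ∀ v, M.R w v → GSat M v A
  | w, .rhd A B => ∀ x, M.R w x → GSat M x A →
      ∃ Y, M.S w x Y ∧ ∀ y ∈ Y, GSat M y B

/-- Validity on a generalized Veltman frame. -/
def GFrame.Valid (F : GFrame) (A : Fm) : Prop :=
  ∀ val : F.W → ℕ → Prop, ∀ w : F.W, GSat { toGFrame := F, val := val } w A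

/-- Instances of the principle M0. -/
def m0fm (A B C : Fm) : Fm :=
  .imp (.rhd A B) (.rhd (Fm.conj (Fm.dia A) (.box C)) (Fm.conj B (.box C)))

/-- Instances of the principle P0. -/
def p0fm (A B : Fm) : Fm := .imp (.rhd A (Fm.dia B)) (.box (.rhd A B))

/-- Instances of the principle R. -/
def rfm (A B C : Fm) : Fm :=
  .imp (.rhd A B) (.rhd (Fm.neg (.rhd A (Fm.neg C))) (Fm.conj B (.box C)))

/-- Instances of the principle W. -/
def wfm (A B : Fm) : Fm :=
  .imp (.rhd A B) (.rhd A (Fm.conj B (.box (Fm.neg A))))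

/-- Instances of the principle W*. -/
def wstarfm (A B C : Fm) : Fm :=
  .imp (.rhd A B)
    (.rhd (Fm.conj B (.box C)) (Fm.conj (Fm.conj B (.box C)) (.box (Fm.neg A))))

/-- Instances of the principle R*. -/
def rstarfm (A B C : Fm) : Fm :=
  .imp (.rhd A B)
    (.rhd (Fm.neg (.rhd A (Fm.neg C))) (Fm.conj (Fm.conj B (.box C)) (.box (Fm.neg A))))

/-- The frame condition for M0 on generalized Veltman frames. -/
def GFrame.M0Cond (F : GFrame) : Prop :=
  ∀ w x y Y, F.R w x → F.R x y → F.S w y Y →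
    ∃ Y', Y' ⊆ Y ∧ F.S w x Y' ∧ ∀ y' ∈ Y', ∀ z, F.R y' z → F.R x z

/-- The frame condition for P0 on generalized Veltman frames. -/
def GFrame.P0Cond (F : GFrame) : Prop :=
  ∀ w x y Y Z, F.R w x → F.R x y → F.S w y Y →
    (∀ y' ∈ Y, ∃ z ∈ Z, F.R y' z) → ∃ Z', Z' ⊆ Z ∧ F.S x y Z'

/-- `Γ` is a choice set for `(w,x)`. -/
def GFrame.ChoiceSet (F : GFrame) (w x : F.W) (Γ : Set F.W) : Prop :=
  ∀ X, F.S w x X → (X ∩ Γ).Nonempty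

/-- The frame condition for R on generalized Veltman frames. -/
def GFrame.RCond (F : GFrame) : Prop :=
  ∀ w x y Y, F.R w x → F.R x y → F.S w y Y →
    ∀ Γ, F.ChoiceSet x y Γ →
      ∃ Y', Y' ⊆ Y ∧ F.S w x Y' ∧ ∀ y' ∈ Y', ∀ z, F.R y' z → z ∈ Γ

/-- The axiom set consisting of all instances of P0 and M0. -/
def P0M0Ax : Fm → Prop := fun F => (∃ A B, F = p0fm A B) ∨ (∃ A B C, F = m0fm A B C)
/-! ### Auxiliary semantic lemmas -/

lemma gsat_neg {M : GModel} {u : M.W} {A : Fm} :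
    GSat M u (Fm.neg A) ↔ ¬ GSat M u A := by
  simp [Fm.neg, GSat]

lemma gsat_conj {M : GModel} {u : M.W} {A B : Fm} :
    GSat M u (Fm.conj A B) ↔ GSat M u A ∧ GSat M u B := by
  simp only [Fm.conj, Fm.neg, GSat]
  tauto

lemma gsat_disj {M : GModel} {u : M.W} {A B : Fm} :
    GSat M u (Fm.disj A B) ↔ GSat M u A ∨ GSat M u B := by
  simp only [Fm.disj, Fm.neg, GSat]
  tauto

lemma gsat_dia {M : GModel} {u : M.W} {A : Fm} :
    GSat M u (Fm.dia A) ↔ ∃ v, M.R u v ∧ GSat M v A := by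
  classical
  simp only [Fm.dia, Fm.neg, GSat]
  constructor
  · intro h
    by_contra hc
    push_neg at hc
    exact h (fun v hv hA => hc v hv hA) 
  · rintro ⟨v, hv, hA⟩ h
    exact h v hv hA

lemma taut_gsat {M : GModel} {u : M.W} {A : Fm} (h : Taut A) : GSat M u A := by
  classical
  let f : Fm → Bool := fun B => decide (GSat M u B)
  have hf : PropEval f := by
    refine ⟨decide_eq_false (by simp [GSat]), fun A B => ?_⟩
    by_cases hA : GSat M u A <;> by_cases hB : GSat M u B <;>
      simp [f, GSat, hA, hB]
  have := h f hf
  simpa [f] using this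

/-- Soundness of ILP0M0 on generalized frames with the P0 and M0 conditions. -/
theorem prov_sound {F : GFrame} (hP : F.P0Cond) (hM : F.M0Cond) :
    ∀ {A : Fm}, Prov P0M0Ax A → F.Valid A := by
  classical
  intro A h
  induction h with
  | taut ht => intro val u; exact taut_gsat ht
  | @extra A hX =>
      intro val u
      set M : GModel := { toGFrame := F, val := val } with hMdef
      rcases hX with ⟨A, B, rfl⟩ | ⟨A, B, C, rfl⟩
      · -- P0
        intro h x hx y hxy hAy
        obtain ⟨Y, hY, hYd⟩ := h y (F.R_trans hx hxy) hAy
        have hcond : ∀ y' ∈ Y, ∃ z ∈ {z | GSat M z B}, F.R y' z := by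
          intro y' hy'
          obtain ⟨z, hz, hB⟩ := gsat_dia.1 (hYd y' hy')
          exact ⟨z, hB, hz⟩
        obtain ⟨Z', hsub, hS⟩ := hP u x y Y _ hx hxy hY hcond
        exact ⟨Z', hS, fun z hz => hsub hz⟩
      · -- M0
        intro h x hx hconj
        rcases gsat_conj.1 hconj with ⟨hdA, hbC⟩
        obtain ⟨y', hxy', hA⟩ := gsat_dia.1 hdA
        obtain ⟨Y, hY, hB⟩ := h y' (F.R_trans hx hxy') hA
        obtain ⟨Y', hsub, hS, hz⟩ := hM u x y' Y hx hxy' hY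
        refine ⟨Y', hS, fun v hv => gsat_conj.2 ⟨hB v (hsub hv), ?_⟩⟩
        intro t ht
        exact hbC t (hz v hv t ht)
  | l1 A B =>
      intro val u h hA v hv
      exact h v hv (hA v hv)
  | l2 A =>
      intro val u h v hv t ht
      exact h t (F.R_trans hv ht)
  | l3 A =>
      intro val u h
      have : ∀ v, F.R u v → GSat { toGFrame := F, val := val } v A := by
        intro v
        induction v using F.R_cwf.induction with
        | _ v IH =>
          intro hv
          exact h v hv (fun t ht => IH t ht (F.R_trans hv ht))
      exact this
  | j1 A B =>
      intro val u h x hx hA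
      refine ⟨(Set.singleton x), F.S_refl hx, ?_⟩
      rintro y rfl
      exact h _ hx hA
  | j2 A B C =>
      intro val u hconj x hx hA
      rcases gsat_conj.1 hconj with ⟨h1, h2⟩
      obtain ⟨Y, hY, hB⟩ := h1 x hx hA
      by_cases hex : ∃ y ∈ Y, ∃ Z, y ∉ Z ∧ F.S u y Z ∧
          ∀ z ∈ Z, GSat { toGFrame := F, val := val } z C
      · obtain ⟨y, hy, Z, hnZ, hZ, hC⟩ := hex
        exact ⟨Z, F.S_qtrans hY y hy Z hnZ hZ, hC⟩
      · push_neg at hex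
        refine ⟨Y, hY, fun y hy => ?_⟩
        obtain ⟨Z, hZ, hC⟩ := h2 y ((F.S_R hY).2 y hy) (hB y hy)
        by_cases hyZ : y ∈ Z
        · exact hC y hyZ
        · obtain ⟨z, hz, hnc⟩ := hex y hy Z hyZ hZ
          exact absurd (hC z hz) hnc
  | j3 A B C =>
      intro val u hconj x hx hAB
      rcases gsat_conj.1 hconj with ⟨h1, h2⟩
      rcases gsat_disj.1 hAB with hA | hB
      · exact h1 x hx hA
      · exact h2 x hx hB
  | j4 A B =>
      intro val u h hd
      obtain ⟨v, hv, hA⟩ := gsat_dia.1 hd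
      obtain ⟨Y, hY, hB⟩ := h v hv hA
      obtain ⟨y, hy⟩ := F.S_ne hY
      exact gsat_dia.2 ⟨y, (F.S_R hY).2 y hy, hB y hy⟩
  | j5 A =>
      intro val u x hx hd
      obtain ⟨v, hv, hA⟩ := gsat_dia.1 hd
      exact ⟨(Set.singleton v), F.R_S hx hv, by rintro y rfl; exact hA⟩
  | mp _ _ ih1 ih2 =>
      intro val u
      exact ih1 val u (ih2 val u)
  | nec _ ih =>
      intro val u v hv
      exact ih val v
/-! ### The concrete 7-world counterexample frame -/

inductive W7 : Type
  | w | x | y | a0 | a1 | b0 | b1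
deriving DecidableEq

instance : Fintype W7 :=
  ⟨⟨(([W7.w, W7.x, W7.y, W7.a0, W7.a1, W7.b0, W7.b1] : List W7) : Multiset W7), by decide⟩, by intro t; cases t <;> decide⟩

namespace W7

def Rb : W7 → W7 → Bool
  | .w, .x => true | .w, .y => true | .w, .a0 => true | .w, .a1 => true
  | .w, .b0 => true | .w, .b1 => true
  | .x, .y => true | .x, .b0 => true | .x, .b1 => true
  | .a0, .b0 => true | .a1, .b1 => true
  | _, _ => false

def S7 : W7 → W7 → Set W7 → Prop
  | .w, .x, Y => Y = {.x} ∨ Y = {.y} ∨ Y = {.b0} ∨ Y = {.b1} ∨ Y = {.a0, .a1}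
  | .w, .y, Y => Y = {.y} ∨ Y = {.a0, .a1} ∨ Y = {.b0} ∨ Y = {.b1}
  | .w, .a0, Y => Y = {.a0} ∨ Y = {.b0}
  | .w, .a1, Y => Y = {.a1} ∨ Y = {.b1}
  | .w, .b0, Y => Y = {.b0}
  | .w, .b1, Y => Y = {.b1}
  | .x, .y, Y => Y = {.y} ∨ Y = {.b0, .b1}
  | .x, .b0, Y => Y = {.b0}
  | .x, .b1, Y => Y = {.b1}
  | .a0, .b0, Y => Y = {.b0}
  | .a1, .b1, Y => Y = {.b1}
  | _, _, _ => False

def rk : W7 → ℕ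
  | .w => 2 | .x => 1 | .a0 => 1 | .a1 => 1 | _ => 0

end W7

def F7 : GFrame where
  W := W7
  ne := ⟨.w⟩
  R := fun u v => W7.Rb u v = true
  S := W7.S7
  R_trans := by
    have : ∀ a b c : W7, W7.Rb a b = true → W7.Rb b c = true → W7.Rb a c = true := by decide
    intro a b c h1 h2; exact this a b c h1 h2
  R_cwf := by
    have key : ∀ a b : W7, W7.Rb b a = true → W7.rk a < W7.rk b := by decide
    exact Subrelation.wf (fun {a b} h => key a b h) (InvImage.wf W7.rk Nat.lt_wfRel.wf)
  S_ne := by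
    intro u v Y h
    cases u <;> cases v <;> simp only [W7.S7] at h <;>
      first
      | exact h.elim
      | (rcases h with rfl | rfl | rfl | rfl | rfl <;>
          first
          | exact Set.singleton_nonempty _
          | exact Set.insert_nonempty _ _)
  S_R := by
    intro u v Y h
    cases u <;> cases v <;> simp only [W7.S7] at h <;> first
    | exact h.elim
    | (rcases h with rfl | rfl | rfl | rfl | rfl <;>
        refine ⟨by decide, ?_⟩ <;> intro t ht <;>
        simp only [Set.mem_insert_iff, Set.mem_singleton_iff] at ht <;>
        rcases ht with rfl | rfl <;> decide)
  S_refl := by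
    intro u v h
    cases u <;> cases v <;> simp_all [W7.Rb, W7.S7]
  S_qtrans := by
    intro u v Y h t ht Z htZ hZ
    cases u <;> cases v <;> simp only [W7.S7] at h ⊢ <;>
    first
    | exact h.elim
    | (rcases h with rfl | rfl | rfl | rfl | rfl <;>
        simp only [Set.mem_insert_iff, Set.mem_singleton_iff] at ht <;>
        rcases ht with rfl | rfl <;>
        simp only [W7.S7] at hZ <;>
        rcases hZ with rfl | rfl | rfl | rfl | rfl <;>
        simp_all)
  R_S := by
    intro u v t h1 h2
    cases u <;> cases v <;> cases t <;> simp_all [W7.Rb, W7.S7]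
instance F7.decR (u v : W7) : Decidable (F7.R u v) :=
  inferInstanceAs (Decidable (W7.Rb u v = true))

lemma F7_P0 : F7.P0Cond := by
  intro a b c Y Z hab hbc hS hch
  change W7.Rb a b = true at hab
  change W7.Rb b c = true at hbc
  change W7.S7 a c Y at hS
  cases a <;> cases b <;> (try exact (Bool.false_ne_true hab).elim) <;>
    cases c <;> (try exact (Bool.false_ne_true hbc).elim)
  · -- (w, x, y)
    rcases hS with rfl | rfl | rfl | rfl
    · obtain ⟨z, _, hr⟩ := hch W7.y rfl
      exact absurd hr (by revert hr; cases z <;> decide)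
    · obtain ⟨z0, hz0, hr0⟩ := hch W7.a0 (Or.inl rfl)
      obtain ⟨z1, hz1, hr1⟩ := hch W7.a1 (Or.inr rfl)
      have e0 : z0 = W7.b0 := by cases z0 <;> first | rfl | exact absurd hr0 (by decide)
      have e1 : z1 = W7.b1 := by cases z1 <;> first | rfl | exact absurd hr1 (by decide)
      subst e0; subst e1
      refine ⟨{W7.b0, W7.b1}, ?_, Or.inr rfl⟩
      intro t ht
      rcases ht with rfl | rfl
      · exact hz0
      · exact hz1
    · obtain ⟨z, _, hr⟩ := hch W7.b0 rfl
      exact absurd hr (by revert hr; cases z <;> decide)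
    · obtain ⟨z, _, hr⟩ := hch W7.b1 rfl
      exact absurd hr (by revert hr; cases z <;> decide)
  · -- (w, x, b0)
    subst hS
    obtain ⟨z, _, hr⟩ := hch W7.b0 rfl
    exact absurd hr (by revert hr; cases z <;> decide)
  · -- (w, x, b1)
    subst hS
    obtain ⟨z, _, hr⟩ := hch W7.b1 rfl
    exact absurd hr (by revert hr; cases z <;> decide)
  · -- (w, a0, b0)
    subst hS
    obtain ⟨z, _, hr⟩ := hch W7.b0 rfl
    exact absurd hr (by revert hr; cases z <;> decide)
  · -- (w, a1, b1)
    subst hS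
    obtain ⟨z, _, hr⟩ := hch W7.b1 rfl
    exact absurd hr (by revert hr; cases z <;> decide)

lemma F7_M0 : F7.M0Cond := by
  intro a b c Y hab hbc hS
  change W7.Rb a b = true at hab
  change W7.Rb b c = true at hbc
  change W7.S7 a c Y at hS
  cases a <;> cases b <;> (try exact (Bool.false_ne_true hab).elim) <;>
    cases c <;> (try exact (Bool.false_ne_true hbc).elim)
  · -- (w, x, y)
    rcases hS with rfl | rfl | rfl | rfl
    · refine ⟨{W7.y}, Set.Subset.refl _, Or.inr (Or.inl rfl), ?_⟩
      rintro y' rfl z hz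
      exact absurd hz (by revert hz; cases z <;> decide)
    · refine ⟨{W7.a0, W7.a1}, Set.Subset.refl _,
        Or.inr (Or.inr (Or.inr (Or.inr rfl))), ?_⟩
      rintro y' (rfl | rfl) z hz <;>
        exact (by revert hz; cases z <;> decide : W7.Rb _ z = true → W7.Rb W7.x z = true) hz
    · refine ⟨{W7.b0}, Set.Subset.refl _, Or.inr (Or.inr (Or.inl rfl)), ?_⟩
      rintro y' rfl z hz
      exact absurd hz (by revert hz; cases z <;> decide)
    · refine ⟨{W7.b1}, Set.Subset.refl _, Or.inr (Or.inr (Or.inr (Or.inl rfl))), ?_⟩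
      rintro y' rfl z hz
      exact absurd hz (by revert hz; cases z <;> decide)
  · -- (w, x, b0)
    subst hS
    refine ⟨{W7.b0}, Set.Subset.refl _, Or.inr (Or.inr (Or.inl rfl)), ?_⟩
    rintro y' rfl z hz
    exact absurd hz (by revert hz; cases z <;> decide)
  · -- (w, x, b1)
    subst hS
    refine ⟨{W7.b1}, Set.Subset.refl _, Or.inr (Or.inr (Or.inr (Or.inl rfl))), ?_⟩
    rintro y' rfl z hz
    exact absurd hz (by revert hz; cases z <;> decide)
  · -- (w, a0, b0)
    subst hS
    refine ⟨{W7.b0}, Set.Subset.refl _, Or.inr rfl, ?_⟩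
    rintro y' rfl z hz
    exact absurd hz (by revert hz; cases z <;> decide)
  · -- (w, a1, b1)
    subst hS
    refine ⟨{W7.b1}, Set.Subset.refl _, Or.inr rfl, ?_⟩
    rintro y' rfl z hz
    exact absurd hz (by revert hz; cases z <;> decide)

lemma F7_notR : ¬ F7.RCond := by
  intro h
  have hch : F7.ChoiceSet W7.x W7.y {W7.y, W7.b1} := by
    intro X hX
    rcases hX with rfl | rfl
    · exact ⟨W7.y, rfl, Or.inl rfl⟩
    · exact ⟨W7.b1, Or.inr rfl, Or.inr rfl⟩
  obtain ⟨Y', hsub, hS', hall⟩ :=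
    h W7.w W7.x W7.y {W7.a0, W7.a1} rfl rfl (Or.inr (Or.inl rfl)) _ hch
  rcases hS' with rfl | rfl | rfl | rfl | rfl
  · exact absurd (hsub rfl) (by rintro (h | h) <;> cases h)
  · exact absurd (hsub rfl) (by rintro (h | h) <;> cases h)
  · exact absurd (hsub rfl) (by rintro (h | h) <;> cases h)
  · exact absurd (hsub rfl) (by rintro (h | h) <;> cases h)
  · exact absurd (hall W7.a0 (Or.inl rfl) W7.b0 rfl) (by rintro (h | h) <;> cases h)

def val7 : W7 → ℕ → Prop := fun u n =>
  (n = 0 ∧ u = .y) ∨ (n = 1 ∧ (u = .a0 ∨ u = .a1)) ∨ (n = 2 ∧ (u = .y ∨ u = .b1))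

instance : ∀ u n, Decidable (val7 u n) := fun u n => by unfold val7; infer_instance

def M7 : GModel := { toGFrame := F7, val := val7 }

instance M7.decAtom (u : W7) (n : ℕ) : Decidable (GSat M7 u (.atom n)) :=
  inferInstanceAs (Decidable (val7 u n))

lemma M7_not_rfm : ¬ GSat M7 W7.w (rfm (.atom 0) (.atom 1) (.atom 2)) := by
  intro hsat
  have hpre : GSat M7 W7.w (.rhd (.atom 0) (.atom 1)) := by
    intro t ht hA
    have ht' : t = W7.y := by
      rcases hA with ⟨_, rfl⟩ | ⟨h, _⟩ | ⟨h, _⟩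
      · rfl
      · exact absurd h (by decide)
      · exact absurd h (by decide)
    subst ht'
    refine ⟨{W7.a0, W7.a1}, Or.inr (Or.inl rfl), ?_⟩
    rintro s (rfl | rfl)
    · exact Or.inr (Or.inl ⟨rfl, Or.inl rfl⟩)
    · exact Or.inr (Or.inl ⟨rfl, Or.inr rfl⟩)
  have hx : GSat M7 W7.x (Fm.neg (.rhd (.atom 0) (Fm.neg (.atom 2)))) := by
    intro hAC
    obtain ⟨Z, hZ, hnc⟩ := hAC W7.y rfl (Or.inl ⟨rfl, rfl⟩)
    rcases hZ with rfl | rfl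
    · exact hnc W7.y rfl (Or.inr (Or.inr ⟨rfl, Or.inl rfl⟩))
    · exact hnc W7.b1 (Or.inr rfl) (Or.inr (Or.inr ⟨rfl, Or.inr rfl⟩))
  obtain ⟨Y', hS', hall⟩ := hsat hpre W7.x rfl hx
  rcases hS' with rfl | rfl | rfl | rfl | rfl
  · exact absurd ((gsat_conj.1 (hall W7.x rfl)).1) (by decide)
  · exact absurd ((gsat_conj.1 (hall W7.y rfl)).1) (by decide)
  · exact absurd ((gsat_conj.1 (hall W7.b0 rfl)).1) (by decide)
  · exact absurd ((gsat_conj.1 (hall W7.b1 rfl)).1) (by decide)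
  · exact absurd ((gsat_conj.1 (hall W7.a0 (Or.inl rfl))).2 W7.b0 rfl) (by decide)

/-- a generalized Veltman frame satisfying the P0 and M0 conditions
but not the R condition; consequently ILP0M0 does not derive R. -/
theorem exists_p0_m0_not_r_gframe :
    (∃ F : GFrame, F.P0Cond ∧ F.M0Cond ∧ ¬ F.RCond) ∧
    (∃ A B C : Fm, ¬ Prov P0M0Ax (rfm A B C)) := by
  refine ⟨⟨F7, F7_P0, F7_M0, F7_notR⟩, .atom 0, .atom 1, .atom 2, ?_⟩
  intro hprov
  exact M7_not_rfm (prov_sound F7_P0 F7_M0 hprov val7 W7.w)
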